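/- Let A, B be disjoint subsets of Arcs(n) with A ∪ B ≠ ∅. The primary inequality ∑_{a∈A} x_a − ∑_{b∈B} x_b ≤ 1 is valid for the interval order polytope PIO_n if and only if A and B satisfy Conditions C1, C2 and C3. -/
import Mathlib


open Finset

abbrev Vec (n : ℕ) := Fin n × Fin n → ℝ

def chi {n : ℕ} (R : Finset (Fin n × Fin n)) : Vec n := fun p => if p ∈ R then 1 else 0

def IsPartialOrderRel {n : ℕ} (R : Finset (Fin n × Fin n)) : Prop :=
  (∀ i j : Fin n, (i, j) ∈ R → (j, i) ∉ R) ∧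
  (∀ i j k : Fin n, (i, j) ∈ R → (j, k) ∈ R → (i, k) ∈ R)

def IsLinearOrderRel {n : ℕ} (R : Finset (Fin n × Fin n)) : Prop :=
  IsPartialOrderRel R ∧ ∀ i j : Fin n, i ≠ j → (i, j) ∈ R ∨ (j, i) ∈ R

def IsStrictWeakOrderRel {n : ℕ} (R : Finset (Fin n × Fin n)) : Prop :=
  IsPartialOrderRel R ∧ ∀ i j k : Fin n, (i, k) ∈ R → (i, j) ∈ R ∨ (j, k) ∈ R

def IsIntervalOrderRel {n : ℕ} (R : Finset (Fin n × Fin n)) : Prop :=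
  ∃ f g : Fin n → ℝ, (∀ i, f i ≤ g i) ∧ ∀ i j : Fin n, ((i, j) ∈ R ↔ g i < f j)

def IsSemiorderRel {n : ℕ} (R : Finset (Fin n × Fin n)) : Prop :=
  ∃ f : Fin n → ℝ, ∀ i j : Fin n, ((i, j) ∈ R ↔ f i + 1 < f j)

def PPO (n : ℕ) : Set (Vec n) := convexHull ℝ {x | ∃ R, IsPartialOrderRel R ∧ x = chi R}
def PIO (n : ℕ) : Set (Vec n) := convexHull ℝ {x | ∃ R, IsIntervalOrderRel R ∧ x = chi R}
def PSO (n : ℕ) : Set (Vec n) := convexHull ℝ {x | ∃ R, IsSemiorderRel R ∧ x = chi R}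
def PSWO (n : ℕ) : Set (Vec n) := convexHull ℝ {x | ∃ R, IsStrictWeakOrderRel R ∧ x = chi R}
def PLO (n : ℕ) : Set (Vec n) := convexHull ℝ {x | ∃ R, IsLinearOrderRel R ∧ x = chi R}

open Classical in
noncomputable def adim {n : ℕ} (s : Set (Vec n)) : ℤ :=
  if s = ∅ then -1 else (Module.finrank ℝ (affineSpan ℝ s).direction : ℤ)

def lhs {n : ℕ} (α : Fin n × Fin n → ℝ) (x : Vec n) : ℝ := ∑ p : Fin n × Fin n, α p * x p

def Valid {n : ℕ} (α : Fin n × Fin n → ℝ) (β : ℝ) (P : Set (Vec n)) : Prop :=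
  ∀ x ∈ P, lhs α x ≤ β

def Face {n : ℕ} (α : Fin n × Fin n → ℝ) (β : ℝ) (P : Set (Vec n)) : Set (Vec n) :=
  {x | x ∈ P ∧ lhs α x = β}

def IsFDI {n : ℕ} (α : Fin n × Fin n → ℝ) (β : ℝ) (P : Set (Vec n)) : Prop :=
  Valid α β P ∧ adim (Face α β P) = adim P - 1

def primCoeff {n : ℕ} (A B : Finset (Fin n × Fin n)) : Fin n × Fin n → ℝ :=
  fun p => (if p ∈ A then (1 : ℝ) else 0) - (if p ∈ B then (1 : ℝ) else 0)

def InArcs {n : ℕ} (A : Finset (Fin n × Fin n)) : Prop := ∀ p ∈ A, p.1 ≠ p.2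

def C1 {n : ℕ} (A : Finset (Fin n × Fin n)) : Prop :=
  ∀ i j k l : Fin n, (i, j) ∈ A → (k, l) ∈ A → (i, j) ≠ (k, l) → i ≠ k ∧ j ≠ l

def C2 {n : ℕ} (A B : Finset (Fin n × Fin n)) : Prop :=
  ∀ i j k l : Fin n, (i, j) ∈ A → (k, l) ∈ A →
    i ≠ j → i ≠ k → i ≠ l → j ≠ k → j ≠ l → k ≠ l → (i, l) ∈ B

def C3 {n : ℕ} (A B : Finset (Fin n × Fin n)) : Prop :=
  ∀ i j k : Fin n, (i, j) ∈ A → (j, k) ∈ A → i ≠ j → j ≠ k → i ≠ k → (i, k) ∈ B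

def C4 {n : ℕ} (A B : Finset (Fin n × Fin n)) : Prop :=
  ∀ i j k : Fin n, (i, j) ∈ A → (j, k) ∈ A → i ≠ j → j ≠ k → i ≠ k →
    ((i, k) ∈ B ∨ ∃ p : Fin n, p ≠ i ∧ p ≠ j ∧ p ≠ k ∧ (i, p) ∈ B ∧ (p, k) ∈ B)

def C5 {n : ℕ} (A B : Finset (Fin n × Fin n)) : Prop :=
  ∀ i j k l : Fin n, (i, j) ∈ A → (j, k) ∈ A → (k, l) ∈ A →
    i ≠ j → i ≠ k → i ≠ l → j ≠ k → j ≠ l → k ≠ l →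
    ((i, k) ∈ B ∨ (j, l) ∈ B ∨
     (∃ r : Fin n, r ≠ i ∧ r ≠ j ∧ r ≠ k ∧ r ≠ l ∧ (i, r) ∈ B ∧ (r, k) ∈ B) ∨
     (∃ s : Fin n, s ≠ i ∧ s ≠ j ∧ s ≠ k ∧ s ≠ l ∧ (j, s) ∈ B ∧ (s, l) ∈ B) ∨
     (∃ t : Fin n, t ≠ i ∧ t ≠ j ∧ t ≠ k ∧ t ≠ l ∧ (i, t) ∈ B ∧ (t, l) ∈ B) ∨
     (∃ u v : Fin n, u ≠ v ∧ u ≠ i ∧ u ≠ j ∧ u ≠ k ∧ u ≠ l ∧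
        v ≠ i ∧ v ≠ j ∧ v ≠ k ∧ v ≠ l ∧ (i, u) ∈ B ∧ (u, v) ∈ B ∧ (v, l) ∈ B))


section AuxValidPrimary

lemma lhs_chi_eq {n : ℕ} (A B R : Finset (Fin n × Fin n)) :
    lhs (primCoeff A B) (chi R) = ((A ∩ R).card : ℝ) - ((B ∩ R).card : ℝ) := by
  have h : ∀ p : Fin n × Fin n, primCoeff A B p * chi R p
      = (if p ∈ A ∩ R then (1:ℝ) else 0) - (if p ∈ B ∩ R then (1:ℝ) else 0) := by
    intro p
    simp only [primCoeff, chi, Finset.mem_inter]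
    split_ifs <;> simp_all
  unfold lhs
  rw [Finset.sum_congr rfl (fun p _ => h p), Finset.sum_sub_distrib]
  have e1 : Finset.filter (fun x => x ∈ A ∧ x ∈ R) Finset.univ = A ∩ R := by
    ext p; simp [Finset.mem_inter]
  have e2 : Finset.filter (fun x => x ∈ B ∧ x ∈ R) Finset.univ = B ∩ R := by
    ext p; simp [Finset.mem_inter]
  simp [Finset.mem_inter, e1, e2]

lemma valid_hull_aux {n : ℕ} (α : Fin n × Fin n → ℝ) (β : ℝ) (s : Set (Vec n))
    (h : ∀ x ∈ s, lhs α x ≤ β) : ∀ x ∈ convexHull ℝ s, lhs α x ≤ β := by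
  have hlin : IsLinearMap ℝ (lhs (n := n) α) := by
    constructor
    · intro x y; simp [lhs, mul_add, Finset.sum_add_distrib]
    · intro c x; simp [lhs, Finset.mul_sum]; apply Finset.sum_congr rfl; intros; ring
  exact fun x hx => convexHull_min h (convex_halfSpace_le hlin β) hx

lemma fst_injA {n : ℕ} {A : Finset (Fin n × Fin n)} (hC1 : C1 A)
    {b b' : Fin n × Fin n} (hb : b ∈ A) (hb' : b' ∈ A) (h : b.1 = b'.1) : b = b' := by
  by_contra hne
  exact ((hC1 b.1 b.2 b'.1 b'.2 (by simpa using hb) (by simpa using hb')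
    (by simpa [Prod.ext_iff] using hne)).1) h

lemma snd_injA {n : ℕ} {A : Finset (Fin n × Fin n)} (hC1 : C1 A)
    {b b' : Fin n × Fin n} (hb : b ∈ A) (hb' : b' ∈ A) (h : b.2 = b'.2) : b = b' := by
  by_contra hne
  exact ((hC1 b.1 b.2 b'.1 b'.2 (by simpa using hb) (by simpa using hb')
    (by simpa [Prod.ext_iff] using hne)).2) h

lemma key_count {n : ℕ} {A B R : Finset (Fin n × Fin n)}
    (hA : InArcs A) (hC1 : C1 A) (hC2 : C2 A B) (hC3 : C3 A B)
    (hR : IsIntervalOrderRel R) : (A ∩ R).card ≤ (B ∩ R).card + 1 := by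
  classical
  obtain ⟨f, g, hfg, hiff⟩ := hR
  set S := A ∩ R with hS
  set T := B ∩ R with hT
  rcases S.eq_empty_or_nonempty with hSe | ⟨a0, ha0⟩
  · simp [hSe]
  have ha0A : a0 ∈ A := (Finset.mem_inter.mp ha0).1
  have ha0R : a0 ∈ R := (Finset.mem_inter.mp ha0).2
  have pairlem : ∀ b ∈ S, b ≠ a0 → ((a0.1, b.2) ∈ T ∨ (b.1, a0.2) ∈ T) := by
    intro b hb hbne
    obtain ⟨hbA, hbR⟩ := Finset.mem_inter.mp hb
    set i := a0.1; set j := a0.2; set k := b.1; set l := b.2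
    have hijA : (i, j) ∈ A := by simpa using ha0A
    have hklA : (k, l) ∈ A := by simpa using hbA
    have hij : i ≠ j := hA a0 ha0A
    have hkl : k ≠ l := hA b hbA
    have hne' : (i, j) ≠ (k, l) := by
      intro h
      rw [Prod.mk.injEq] at h
      exact hbne (Prod.ext h.1.symm h.2.symm)
    have h1 := (hC1 i j k l hijA hklA hne')
    have hik : i ≠ k := h1.1
    have hjl : j ≠ l := h1.2
    have hR1 : g i < f j := (hiff i j).mp (by simpa using ha0R)
    have hR2 : g k < f l := (hiff k l).mp (by simpa using hbR)
    by_cases hjk : j = k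
    · have hil : i ≠ l := by
        intro h
        have h2 := hfg j
        have h3 := hfg l
        rw [h] at hR1
        rw [← hjk] at hR2
        linarith
      have hRil : (i, l) ∈ R := by
        apply (hiff i l).mpr
        have h2 := hfg j
        rw [← hjk] at hR2
        linarith
      have hBil : (i, l) ∈ B := hC3 i k l (hjk ▸ hijA) hklA (hjk ▸ hij) hkl hil
      exact Or.inl (Finset.mem_inter.mpr ⟨hBil, hRil⟩)
    · by_cases hli : l = i
      · have hkj : k ≠ j := by
          intro h
          have h2 := hfg i
          have h3 := hfg j
          rw [hli] at hR2
          rw [h] at hR2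
          linarith
        have hRkj : (k, j) ∈ R := by
          apply (hiff k j).mpr
          have h2 := hfg i
          rw [hli] at hR2
          linarith
        have hBkj : (k, j) ∈ B := hC3 k i j (by rw [← hli]; exact hklA) hijA (by rw [← hli]; exact hkl) hij hkj
        exact Or.inr (Finset.mem_inter.mpr ⟨hBkj, hRkj⟩)
      · have hil : i ≠ l := fun h => hli h.symm
        have h22 : g i < f l ∨ g k < f j := by
          by_contra hcon
          push_neg at hcon
          have := hfg j; have := hfg l
          linarith [hcon.1, hcon.2]
        rcases h22 with h' | h'
        · have hRil : (i, l) ∈ R := (hiff i l).mpr h'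
          have hBil : (i, l) ∈ B := hC2 i j k l hijA hklA hij hik hil hjk hjl hkl
          exact Or.inl (Finset.mem_inter.mpr ⟨hBil, hRil⟩)
        · have hRkj : (k, j) ∈ R := (hiff k j).mpr h'
          have hBkj : (k, j) ∈ B := hC2 k l i j hklA hijA hkl (Ne.symm hik) (Ne.symm hjk) (Ne.symm hil) (Ne.symm hjl) hij
          exact Or.inr (Finset.mem_inter.mpr ⟨hBkj, hRkj⟩)
  have hcard : (S.erase a0).card ≤ T.card := by
    apply Finset.card_le_card_of_injOn
      (fun b => if (a0.1, b.2) ∈ T then (a0.1, b.2) else (b.1, a0.2))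
    · intro b hb
      obtain ⟨hbne, hbS⟩ := Finset.mem_erase.mp hb
      rcases pairlem b hbS hbne with h | h
      · simp [h]
      · by_cases h' : (a0.1, b.2) ∈ T
        · simp [h']
        · simpa [h'] using h
    · intro b hb b' hb' heq
      obtain ⟨hbne, hbS⟩ := Finset.mem_erase.mp hb
      obtain ⟨hbne', hbS'⟩ := Finset.mem_erase.mp hb'
      have hbA : b ∈ A := (Finset.mem_inter.mp hbS).1
      have hbA' : b' ∈ A := (Finset.mem_inter.mp hbS').1
      simp only at heq
      split_ifs at heq with h1 h2 h2
      · exact snd_injA hC1 hbA hbA' (Prod.ext_iff.mp heq).2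
      · exfalso
        have : a0.1 = b'.1 := (Prod.ext_iff.mp heq).1
        exact hbne' (fst_injA hC1 hbA' ha0A this.symm)
      · exfalso
        have : b.1 = a0.1 := (Prod.ext_iff.mp heq).1
        exact hbne (fst_injA hC1 hbA ha0A this)
      · exact fst_injA hC1 hbA hbA' (Prod.ext_iff.mp heq).1
  have h1 : 1 ≤ S.card := Finset.card_pos.mpr ⟨a0, ha0⟩
  have h2 : (S.erase a0).card = S.card - 1 := Finset.card_erase_of_mem ha0
  omega

lemma io_two_same_fst {n : ℕ} (i j l : Fin n) (hij : i ≠ j) (hil : i ≠ l) :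
    IsIntervalOrderRel ({(i,j),(i,l)} : Finset (Fin n × Fin n)) := by
  classical
  refine ⟨fun m => if m = i then 0 else if m = j ∨ m = l then 1 else -10,
          fun m => if m = i then 0 else if m = j ∨ m = l then 1 else 10, ?_, ?_⟩
  · intro m; dsimp only; split_ifs <;> norm_num
  · intro x y
    simp only [Finset.mem_insert, Finset.mem_singleton, Prod.mk.injEq]
    split_ifs <;> simp_all <;> norm_num

lemma io_two_same_snd {n : ℕ} (i k j : Fin n) (hij : i ≠ j) (hkj : k ≠ j) :
    IsIntervalOrderRel ({(i,j),(k,j)} : Finset (Fin n × Fin n)) := by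
  classical
  have hji : ¬ j = i := fun h => hij h.symm
  have hjk : ¬ j = k := fun h => hkj h.symm
  refine ⟨fun m => if m = j then 1 else if m = i ∨ m = k then 0 else -10,
          fun m => if m = j then 1 else if m = i ∨ m = k then 0 else 10, ?_, ?_⟩
  · intro m; dsimp only; split_ifs <;> norm_num
  · intro x y
    simp only [Finset.mem_insert, Finset.mem_singleton, Prod.mk.injEq]
    split_ifs <;> simp_all <;> norm_num

lemma io_chain {n : ℕ} (i j k : Fin n) (hij : i ≠ j) (hjk : j ≠ k) (hik : i ≠ k) :
    IsIntervalOrderRel ({(i,j),(j,k),(i,k)} : Finset (Fin n × Fin n)) := by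
  classical
  refine ⟨fun m => if m = i then 0 else if m = j then 1 else if m = k then 2 else -10,
          fun m => if m = i then 0 else if m = j then 1 else if m = k then 2 else 10, ?_, ?_⟩
  · intro m; dsimp only; split_ifs <;> norm_num
  · intro x y
    simp only [Finset.mem_insert, Finset.mem_singleton, Prod.mk.injEq]
    split_ifs <;> simp_all <;> norm_num

lemma io_c2 {n : ℕ} (i j k l : Fin n) (hij : i ≠ j) (hik : i ≠ k) (hil : i ≠ l)
    (hjk : j ≠ k) (hjl : j ≠ l) (hkl : k ≠ l) :
    IsIntervalOrderRel ({(i,j),(i,l),(k,l)} : Finset (Fin n × Fin n)) := by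
  classical
  refine ⟨fun m => if m = i then -3 else if m = j then 1 else if m = k then -1 else if m = l then 2 else -10,
          fun m => if m = i then 0 else if m = j then 5/2 else if m = k then 3/2 else if m = l then 2 else 10, ?_, ?_⟩
  · intro m; dsimp only; split_ifs <;> norm_num
  · intro x y
    simp only [Finset.mem_insert, Finset.mem_singleton, Prod.mk.injEq]
    split_ifs <;> simp_all <;> norm_num

end AuxValidPrimary

theorem valid_primary_pio (n : ℕ) (hn : 2 ≤ n)
    (A B : Finset (Fin n × Fin n)) (hdisj : Disjoint A B)
    (hA : InArcs A) (hB : InArcs B) (hne : (A ∪ B).Nonempty) :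
    Valid (primCoeff A B) 1 (PIO n) ↔ (C1 A ∧ C2 A B ∧ C3 A B) := by
  classical
  constructor
  · intro hV
    have main : ∀ R : Finset (Fin n × Fin n), IsIntervalOrderRel R →
        ((A ∩ R).card : ℝ) - ((B ∩ R).card : ℝ) ≤ 1 := by
      intro R hR
      have := hV (chi R) (subset_convexHull ℝ _ ⟨R, hR, rfl⟩)
      rwa [lhs_chi_eq] at this
    have hBempty : ∀ R : Finset (Fin n × Fin n), R ⊆ A → B ∩ R = ∅ := by
      intro R hsub
      rw [Finset.eq_empty_iff_forall_notMem]
      intro p hp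
      obtain ⟨hpB, hpR⟩ := Finset.mem_inter.mp hp
      exact (Finset.disjoint_left.mp hdisj (hsub hpR)) hpB
    refine ⟨?_, ?_, ?_⟩
    · -- C1
      intro i j k l hijA hklA hnepair
      constructor
      · intro hik
        have hjl : j ≠ l := by
          intro h; exact hnepair (by rw [hik, h])
        have hi_j : i ≠ j := hA _ hijA
        have hi_l : i ≠ l := by
          have := hA _ hklA; simpa [← hik] using this
        set R : Finset (Fin n × Fin n) := {(i,j),(i,l)} with hRdef
        have hio : IsIntervalOrderRel R := io_two_same_fst i j l hi_j hi_l
        have hsub : R ⊆ A := by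
          intro p hp
          rcases Finset.mem_insert.mp hp with h | h
          · rw [h]; exact hijA
          · rw [Finset.mem_singleton] at h; rw [h, hik]; exact hklA
        have hAR : A ∩ R = R := Finset.inter_eq_right.mpr hsub
        have hcard : R.card = 2 := by
          rw [hRdef, Finset.card_insert_of_notMem (by simp [Prod.ext_iff, hjl]),
            Finset.card_singleton]
        have hm := main R hio
        rw [hAR, hBempty R hsub, hcard] at hm
        norm_num at hm
      · intro hjl
        have hik : i ≠ k := by
          intro h; exact hnepair (by rw [h, hjl])
        have hi_j : i ≠ j := hA _ hijA
        have hk_j : k ≠ j := by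
          have := hA _ hklA; simpa [← hjl] using this
        set R : Finset (Fin n × Fin n) := {(i,j),(k,j)} with hRdef
        have hio : IsIntervalOrderRel R := io_two_same_snd i k j hi_j hk_j
        have hsub : R ⊆ A := by
          intro p hp
          rcases Finset.mem_insert.mp hp with h | h
          · rw [h]; exact hijA
          · rw [Finset.mem_singleton] at h; rw [h, hjl]; exact hklA
        have hAR : A ∩ R = R := Finset.inter_eq_right.mpr hsub
        have hcard : R.card = 2 := by
          rw [hRdef, Finset.card_insert_of_notMem (by simp [Prod.ext_iff, hik]),
            Finset.card_singleton]
        have hm := main R hio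
        rw [hAR, hBempty R hsub, hcard] at hm
        norm_num at hm
    · -- C2
      intro i j k l hijA hklA hij hik hil hjk hjl hkl
      by_contra hBil
      set R : Finset (Fin n × Fin n) := {(i,j),(i,l),(k,l)} with hRdef
      have hio : IsIntervalOrderRel R := io_c2 i j k l hij hik hil hjk hjl hkl
      have hsub2 : ({(i,j),(k,l)} : Finset (Fin n × Fin n)) ⊆ A ∩ R := by
        intro p hp
        rcases Finset.mem_insert.mp hp with h | h
        · rw [h]; exact Finset.mem_inter.mpr ⟨hijA, by simp [hRdef]⟩
        · rw [Finset.mem_singleton] at h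
          rw [h]; exact Finset.mem_inter.mpr ⟨hklA, by simp [hRdef]⟩
      have hAcard : 2 ≤ (A ∩ R).card := by
        have h2 : ({(i,j),(k,l)} : Finset (Fin n × Fin n)).card = 2 := by
          rw [Finset.card_insert_of_notMem (by simp [Prod.ext_iff, hik]),
            Finset.card_singleton]
        rw [← h2]
        exact Finset.card_le_card hsub2
      have hBR : B ∩ R = ∅ := by
        rw [Finset.eq_empty_iff_forall_notMem]
        intro p hp
        obtain ⟨hpB, hpR⟩ := Finset.mem_inter.mp hp
        rcases Finset.mem_insert.mp hpR with h | h
        · exact (Finset.disjoint_left.mp hdisj (h ▸ hijA)) (h ▸ hpB)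
        rcases Finset.mem_insert.mp h with h' | h'
        · exact hBil (h' ▸ hpB)
        · rw [Finset.mem_singleton] at h'
          exact (Finset.disjoint_left.mp hdisj (h' ▸ hklA)) (h' ▸ hpB)
      have hm := main R hio
      rw [hBR] at hm
      have h2 : (2:ℝ) ≤ ((A ∩ R).card : ℝ) := by exact_mod_cast hAcard
      simp at hm
      linarith
    · -- C3
      intro i j k hijA hjkA hij hjk hik
      by_contra hBik
      set R : Finset (Fin n × Fin n) := {(i,j),(j,k),(i,k)} with hRdef
      have hio : IsIntervalOrderRel R := io_chain i j k hij hjk hik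
      have hsub2 : ({(i,j),(j,k)} : Finset (Fin n × Fin n)) ⊆ A ∩ R := by
        intro p hp
        rcases Finset.mem_insert.mp hp with h | h
        · rw [h]; exact Finset.mem_inter.mpr ⟨hijA, by simp [hRdef]⟩
        · rw [Finset.mem_singleton] at h
          rw [h]; exact Finset.mem_inter.mpr ⟨hjkA, by simp [hRdef]⟩
      have hAcard : 2 ≤ (A ∩ R).card := by
        have h2 : ({(i,j),(j,k)} : Finset (Fin n × Fin n)).card = 2 := by
          rw [Finset.card_insert_of_notMem (by simp [Prod.ext_iff, hij]),
            Finset.card_singleton]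
        rw [← h2]
        exact Finset.card_le_card hsub2
      have hBR : B ∩ R = ∅ := by
        rw [Finset.eq_empty_iff_forall_notMem]
        intro p hp
        obtain ⟨hpB, hpR⟩ := Finset.mem_inter.mp hp
        rcases Finset.mem_insert.mp hpR with h | h
        · exact (Finset.disjoint_left.mp hdisj (h ▸ hijA)) (h ▸ hpB)
        rcases Finset.mem_insert.mp h with h' | h'
        · exact (Finset.disjoint_left.mp hdisj (h' ▸ hjkA)) (h' ▸ hpB)
        · rw [Finset.mem_singleton] at h'
          exact hBik (h' ▸ hpB)
      have hm := main R hio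
      rw [hBR] at hm
      have h2 : (2:ℝ) ≤ ((A ∩ R).card : ℝ) := by exact_mod_cast hAcard
      simp at hm
      linarith
  · rintro ⟨hC1, hC2, hC3⟩
    intro x hx
    refine valid_hull_aux _ _ _ ?_ x hx
    rintro y ⟨R, hR, rfl⟩
    rw [lhs_chi_eq]
    have hk := key_count hA hC1 hC2 hC3 hR
    have h' : ((A ∩ R).card : ℝ) ≤ ((B ∩ R).card : ℝ) + 1 := by exact_mod_cast hk
    linarith
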